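/- Assume in addition that h is nondecreasing. Let s ∈ ℝ and β ∈ (0,b] be such that (k^{(s)})'(β) = r. Then (k^{(s)})'(x) ≥ 0 for every x ∈ [0,β]. -/

import Mathlib

/-!
If `k'` took a negative value on `[0, β]`, it would be negative strictly between two zeros
`x₁ < x₂` (one exists to the left since `k'(0) = 0`, one to the right since `k'(β) = r > 0`).
On that interval `k` decreases, so `k(x₂) < k(x₁)`. At a zero of `k'` the equation reads
`k'' = (2/σ²)(ϱ k - h)` because `F(0) = 0`; with `h` nondecreasing this gives
`k''(x₂) < k''(x₁)`. But the sign of `k'` around its zeros gives `k''(x₁) ≤ 0 ≤ k''(x₂)`.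
-/

open Set

/-- k (with derivatives k', k'') is a C² solution on [0,b] of the Cauchy problem
k'' + (2/σ²)(m·F(k') + ½σ²ε·F(k')² − ϱ·k + h(x)) = 0, k(0) = s, k'(0) = 0. -/
def IsCauchySolution (b σ ϱ m : ℝ) (h F : ℝ → ℝ) (ε s : ℝ) (k k' k'' : ℝ → ℝ) : Prop :=
  (∀ x ∈ Icc (0:ℝ) b, HasDerivWithinAt k (k' x) (Icc (0:ℝ) b) x) ∧
  (∀ x ∈ Icc (0:ℝ) b, HasDerivWithinAt k' (k'' x) (Icc (0:ℝ) b) x) ∧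
  ContinuousOn k'' (Icc (0:ℝ) b) ∧
  (∀ x ∈ Icc (0:ℝ) b,
    k'' x + (2 / σ ^ 2) * (m * F (k' x) + (1 / 2) * σ ^ 2 * ε * (F (k' x)) ^ 2
      - ϱ * k x + h x) = 0) ∧
  k 0 = s ∧ k' 0 = 0

open Filter Topology

theorem HasDerivWithinAt.nonpos_of_le_right {f : ℝ → ℝ} {f' a c : ℝ} {s : Set ℝ}
    (hf : HasDerivWithinAt f f' s a) (hac : a < c) (hs : Ioo a c ⊆ s)
    (hmax : ∀ x ∈ Ioo a c, f x ≤ f a) : f' ≤ 0 := by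
  have := left_nhdsWithin_Ioo_neBot hac
  refine le_of_tendsto
    ((hasDerivWithinAt_iff_tendsto_slope' fun ha => ha.1.false).mp (hf.mono hs)) ?_
  filter_upwards [self_mem_nhdsWithin] with x hx
  rw [slope_def_field]
  exact div_nonpos_of_nonpos_of_nonneg (sub_nonpos.mpr (hmax x hx)) (sub_nonneg.mpr hx.1.le)

theorem HasDerivWithinAt.nonneg_of_le_left {f : ℝ → ℝ} {f' a c : ℝ} {s : Set ℝ}
    (hf : HasDerivWithinAt f f' s c) (hac : a < c) (hs : Ioo a c ⊆ s)
    (hmax : ∀ x ∈ Ioo a c, f x ≤ f c) : 0 ≤ f' := by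
  have := right_nhdsWithin_Ioo_neBot hac
  refine ge_of_tendsto
    ((hasDerivWithinAt_iff_tendsto_slope' fun hc => hc.2.false).mp (hf.mono hs)) ?_
  filter_upwards [self_mem_nhdsWithin] with x hx
  rw [slope_def_field]
  exact div_nonneg_of_nonpos (sub_nonpos.mpr (hmax x hx)) (sub_nonpos.mpr hx.2.le)

theorem exists_first_zero_of_neg_of_nonneg {f : ℝ → ℝ} {a c : ℝ} (hac : a ≤ c)
    (hf : ContinuousOn f (Icc a c)) (ha : f a < 0) (hc : 0 ≤ f c) :
    ∃ z ∈ Ioc a c, f z = 0 ∧ ∀ x ∈ Ico a z, f x < 0 := by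
  have hS : IsCompact {x ∈ Icc a c | 0 ≤ f x} :=
    isCompact_Icc.of_isClosed_subset
      (hf.preimage_isClosed_of_isClosed isClosed_Icc isClosed_Ici) (sep_subset _ _)
  obtain ⟨z, ⟨hzI, hfz⟩, hleast⟩ := hS.exists_isLeast ⟨c, ⟨hac, le_rfl⟩, hc⟩
  have hbelow : ∀ x ∈ Ico a z, f x < 0 := fun x hx =>
    not_le.mp fun h0 => hx.2.not_ge (hleast ⟨⟨hx.1, hx.2.le.trans hzI.2⟩, h0⟩)
  have haz : a < z := hzI.1.lt_of_ne fun h => (h ▸ ha).not_ge hfz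
  obtain ⟨y, hy, hfy⟩ := intermediate_value_Icc hzI.1 (hf.mono (Icc_subset_Icc_right hzI.2))
    ⟨ha.le, hfz⟩
  have hyz : y = z := le_antisymm hy.2 (hleast ⟨⟨hy.1, hy.2.trans hzI.2⟩, hfy.ge⟩)
  exact ⟨z, ⟨haz, hzI.2⟩, hyz ▸ hfy, hbelow⟩

theorem exists_last_zero_of_nonneg_of_neg {f : ℝ → ℝ} {a c : ℝ} (hac : a ≤ c)
    (hf : ContinuousOn f (Icc a c)) (ha : 0 ≤ f a) (hc : f c < 0) :
    ∃ z ∈ Ico a c, f z = 0 ∧ ∀ x ∈ Ioc z c, f x < 0 := by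
  have hS : IsCompact {x ∈ Icc a c | 0 ≤ f x} :=
    isCompact_Icc.of_isClosed_subset
      (hf.preimage_isClosed_of_isClosed isClosed_Icc isClosed_Ici) (sep_subset _ _)
  obtain ⟨z, ⟨hzI, hfz⟩, hgreatest⟩ := hS.exists_isGreatest ⟨a, ⟨le_rfl, hac⟩, ha⟩
  have habove : ∀ x ∈ Ioc z c, f x < 0 := fun x hx =>
    not_le.mp fun h0 => hx.1.not_ge (hgreatest ⟨⟨hzI.1.trans hx.1.le, hx.2⟩, h0⟩)
  have hzc : z < c := hzI.2.lt_of_ne fun h => (h ▸ hc).not_ge hfz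
  obtain ⟨y, hy, hfy⟩ := intermediate_value_Icc' hzI.2 (hf.mono (Icc_subset_Icc_left hzI.1))
    ⟨hc.le, hfz⟩
  have hyz : y = z := le_antisymm (hgreatest ⟨⟨hzI.1.trans hy.1, hy.2⟩, hfy.ge⟩) hy.1
  exact ⟨z, ⟨hzI.1, hzc⟩, hyz ▸ hfy, habove⟩

namespace IsCauchySolution

variable {b σ ϱ m ε s : ℝ} {h F k k' k'' : ℝ → ℝ}

theorem second_deriv_eq_of_deriv_eq_zero (hsol : IsCauchySolution b σ ϱ m h F ε s k k' k'')
    (hF0 : F 0 = 0) {x : ℝ} (hx : x ∈ Icc 0 b) (hk'x : k' x = 0) :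
    k'' x = 2 / σ ^ 2 * (ϱ * k x - h x) := by
  have := hsol.2.2.2.1 x hx
  rw [hk'x, hF0] at this
  linarith

theorem not_neg_between_zeros (hsol : IsCauchySolution b σ ϱ m h F ε s k k' k'')
    (hσ : σ ≠ 0) (hϱ : 0 < ϱ) (hF0 : F 0 = 0) (hmono : MonotoneOn h (Icc 0 b))
    {x₁ x₂ : ℝ} (hx₁ : x₁ ∈ Icc 0 b) (hx₂ : x₂ ∈ Icc 0 b) (hx₁₂ : x₁ < x₂)
    (hk'x₁ : k' x₁ = 0) (hk'x₂ : k' x₂ = 0) (hneg : ∀ x ∈ Ioo x₁ x₂, k' x < 0) : False := by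
  have hk := hsol.1
  have hk' := hsol.2.1
  have hsub : Icc x₁ x₂ ⊆ Icc 0 b := Icc_subset_Icc hx₁.1 hx₂.2
  have hk_drop : k x₂ < k x₁ := by
    refine strictAntiOn_of_hasDerivWithinAt_neg (convex_Icc x₁ x₂)
      (fun x hx => (hk x (hsub hx)).continuousWithinAt.mono hsub) (fun x hx => ?_)
      (fun x hx => hneg x (by rwa [interior_Icc] at hx))
      (left_mem_Icc.mpr hx₁₂.le) (right_mem_Icc.mpr hx₁₂.le) hx₁₂
    rw [interior_Icc] at hx ⊢
    exact (hk x (hsub (Ioo_subset_Icc_self hx))).mono (Ioo_subset_Icc_self.trans hsub)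
  have hIoo : Ioo x₁ x₂ ⊆ Icc 0 b := Ioo_subset_Icc_self.trans hsub
  have hk''x₁ : k'' x₁ ≤ 0 :=
    (hk' x₁ hx₁).nonpos_of_le_right hx₁₂ hIoo fun x hx => hk'x₁ ▸ (hneg x hx).le
  have hk''x₂ : 0 ≤ k'' x₂ :=
    (hk' x₂ hx₂).nonneg_of_le_left hx₁₂ hIoo fun x hx => hk'x₂ ▸ (hneg x hx).le
  rw [hsol.second_deriv_eq_of_deriv_eq_zero hF0 hx₁ hk'x₁] at hk''x₁
  rw [hsol.second_deriv_eq_of_deriv_eq_zero hF0 hx₂ hk'x₂] at hk''x₂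
  have hC : 0 < 2 / σ ^ 2 := by positivity
  have hh : h x₁ ≤ h x₂ := hmono hx₁ hx₂ hx₁₂.le
  linarith [mul_pos hC (mul_pos hϱ (sub_pos.mpr hk_drop)), mul_nonneg hC.le (sub_nonneg.mpr hh)]

end IsCauchySolution

theorem stmt13_general (b σ ϱ r m ε : ℝ) (hσ : 0 < σ) (hϱ : 0 < ϱ) (hr : 0 < r)
    (h F : ℝ → ℝ)
    (hmono : MonotoneOn h (Icc (0:ℝ) b))
    (hFid : ∀ z : ℝ, |z| ≤ r → F z = z)
    (s : ℝ) (k k' k'' : ℝ → ℝ)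
    (hsol : IsCauchySolution b σ ϱ m h F ε s k k' k'')
    (β : ℝ) (hβ : β ∈ Ioc (0:ℝ) b) (hβr : k' β = r) :
    ∀ x ∈ Icc (0:ℝ) β, 0 ≤ k' x := by
  intro x₀ hx₀
  by_contra! hk'x₀
  have hk'c : ContinuousOn k' (Icc 0 b) := fun x hx => (hsol.2.1 x hx).continuousWithinAt
  have hk'0 : k' 0 = 0 := hsol.2.2.2.2.2
  have hx₀b : x₀ ≤ b := hx₀.2.trans hβ.2
  obtain ⟨x₁, hx₁, hk'x₁, hneg₁⟩ := exists_last_zero_of_nonneg_of_neg hx₀.1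
    (hk'c.mono (Icc_subset_Icc_right hx₀b)) hk'0.ge hk'x₀
  obtain ⟨x₂, hx₂, hk'x₂, hneg₂⟩ := exists_first_zero_of_neg_of_nonneg hx₀.2
    (hk'c.mono (Icc_subset_Icc hx₀.1 hβ.2)) hk'x₀ (hβr ▸ hr.le)
  refine hsol.not_neg_between_zeros hσ.ne' hϱ (hFid 0 (by simpa using hr.le)) hmono
    ⟨hx₁.1, hx₁.2.le.trans hx₀b⟩ ⟨hx₀.1.trans hx₂.1.le, hx₂.2.trans hβ.2⟩
    (hx₁.2.trans hx₂.1) hk'x₁ hk'x₂ fun x hx => ?_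
  rcases le_or_gt x x₀ with hxx₀ | hx₀x
  · exact hneg₁ x ⟨hx.1, hxx₀⟩
  · exact hneg₂ x ⟨hx₀x.le, hx.2⟩

/-- Assume in addition that h is nondecreasing. Let s ∈ ℝ and
β ∈ (0,b] be such that (k^{(s)})'(β) = r. Then (k^{(s)})'(x) ≥ 0 for every
x ∈ [0,β]. -/
theorem stmt13 (b σ ϱ r m ε : ℝ) (hb : 0 < b) (hσ : 0 < σ) (hϱ : 0 < ϱ) (hr : 0 < r)
    (hε : 0 ≤ ε) (h F : ℝ → ℝ)
    (hLip : ∃ K : NNReal, LipschitzOnWith K h (Icc (0:ℝ) b))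
    (hmono : MonotoneOn h (Icc (0:ℝ) b))
    (hF1 : ContDiff ℝ 1 F) (hFid : ∀ z : ℝ, |z| ≤ r → F z = z)
    (hFbd : ∀ z : ℝ, |F z| ≤ 2 * r) (hF'bd : ∀ z : ℝ, |deriv F z| ≤ 1)
    (s : ℝ) (k k' k'' : ℝ → ℝ)
    (hsol : IsCauchySolution b σ ϱ m h F ε s k k' k'')
    (β : ℝ) (hβ : β ∈ Ioc (0:ℝ) b) (hβr : k' β = r) :
    ∀ x ∈ Icc (0:ℝ) β, 0 ≤ k' x :=
  stmt13_general b σ ϱ r m ε hσ hϱ hr h F hmono hFid s k k' k'' hsol β hβ hβr
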